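/- Let 0 ≤ τ < a ≤ p^s − 1 be integers and let h ∈ F[x] be a polynomial that is either zero or a unit modulo (x − δ_{0,0})^{p^s}. Let C be the ideal of S generated by u(x − δ_{0,0})^a + u²(x − δ_{0,0})^τ h(x), and let L be the smallest nonnegative integer such that u²(x − δ_{0,0})^L ∈ C. Then L = a if h = 0, and L = min{a, p^s − a + τ} if h ≠ 0. -/

import Mathlib

/-!
Write `y = x - δ₀₀` and `g = u yᵃ + u² y^τ h`. Since `δ₀₀^{p^s} = δ₀`, Frobenius gives
`x^{p^s} - δ = y^{p^s} - u²δ₂`, so in `S` we have `y^{p^s} = u²δ₂`: `y` is nilpotent, and `h` is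
a unit as soon as `h(δ₀₀) ≠ 0`. Then `u g = u² yᵃ` and `h⁻¹ y^{p^s-a} g = u² y^{p^s-a+τ}`, which
bound `L` from above.

Conversely, every element of `R³[x]` has a unique `u`-adic expansion `P₀ + uP₁ + u²P₂` with
`Pᵢ ∈ F[x]`. If `(P₀ + uP₁ + u²P₂) g = u² y^l` in `S`, comparing the `u`- and `u²`-digits of the
lift to `R³[x]` gives `y^{p^s} ∣ P₀ yᵃ` and `y^{p^s} ∣ P₀ y^τ h + P₁ yᵃ - y^l`. The first forces
`y^{p^s-a} ∣ P₀`, and then the second forces `l ≥ a` when `h = 0`, and `l ≥ min(a, p^s - a + τ)`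
in general.
-/

open Polynomial

/-- The finite chain ring `R^t = 𝔽_{p^m}[u]/⟨u^t⟩`. -/
abbrev Rt (p m t : ℕ) [Fact p.Prime] : Type _ :=
  Polynomial (GaloisField p m) ⧸ Ideal.span {(X : Polynomial (GaloisField p m)) ^ t}

/-- The canonical projection `𝔽_{p^m}[u] → R^t`. -/
noncomputable def mkRt (p m t : ℕ) [Fact p.Prime] :
    Polynomial (GaloisField p m) →+* Rt p m t :=
  Ideal.Quotient.mk _

/-- The element `u ∈ R^t`. -/
noncomputable def uRt (p m t : ℕ) [Fact p.Prime] : Rt p m t := mkRt p m t X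

/-- The canonical embedding `𝔽_{p^m} → R^t`. -/
noncomputable def κ (p m t : ℕ) [Fact p.Prime] : GaloisField p m →+* Rt p m t :=
  (mkRt p m t).comp (C : GaloisField p m →+* Polynomial (GaloisField p m))

/-- The quotient ring `R^t[x]/⟨x^N − δ⟩`. -/
abbrev Qr (p m t : ℕ) [Fact p.Prime] (N : ℕ) (δ : Rt p m t) : Type _ :=
  Polynomial (Rt p m t) ⧸ Ideal.span {(X : Polynomial (Rt p m t)) ^ N - C δ}

/-- The ring structure on `R^t[x]/⟨x^N − δ⟩` (the quotient ring instance, stated explicitly). -/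
noncomputable instance Qr.instCommRing (p m t : ℕ) [Fact p.Prime] (N : ℕ) (δ : Rt p m t) :
    CommRing (Qr p m t N δ) :=
  @Ideal.Quotient.commRing (Polynomial (Rt p m t)) _ _

/-- The canonical projection `R^t[x] → R^t[x]/⟨x^N − δ⟩`. -/
noncomputable def mkQr (p m t : ℕ) [Fact p.Prime] (N : ℕ) (δ : Rt p m t) :
    Polynomial (Rt p m t) →+* Qr p m t N δ :=
  @Ideal.Quotient.mk _ _ _ (@Ideal.instIsTwoSided_1 (Polynomial (Rt p m t)) _ _)

section ChainRing

variable {p m t : ℕ} [Fact p.Prime]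

local notation "ι" => Polynomial.map (κ p m t)
local notation "U" => (C (uRt p m t) : Polynomial (Rt p m t))

theorem uRt_pow_self : uRt p m t ^ t = 0 := by
  rw [uRt, ← map_pow]
  exact Ideal.Quotient.eq_zero_iff_mem.2 (Ideal.subset_span rfl)

theorem C_uRt_pow_self : U ^ t = 0 := by
  rw [← C_pow, uRt_pow_self, C_0]

theorem exists_eq_kappa_add_uRt_mul (r : Rt p m t) :
    ∃ a s, r = κ p m t a + uRt p m t * s := by
  obtain ⟨f, rfl⟩ := Ideal.Quotient.mk_surjective r
  refine ⟨f.coeff 0, mkRt p m t f.divX, ?_⟩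
  change mkRt p m t f = mkRt p m t (C (f.coeff 0)) + mkRt p m t X * mkRt p m t f.divX
  rw [← map_mul, ← map_add, add_comm, X_mul_divX_add]

theorem exists_eq_map_kappa_add_C_uRt_mul (P : Polynomial (Rt p m t)) :
    ∃ P₀ W, P = ι P₀ + U * W := by
  induction P using Polynomial.induction_on' with
  | add P Q hP hQ =>
    obtain ⟨P₀, V, rfl⟩ := hP
    obtain ⟨Q₀, W, rfl⟩ := hQ
    exact ⟨P₀ + Q₀, V + W, by rw [Polynomial.map_add]; ring⟩
  | monomial n r =>
    obtain ⟨a, s, rfl⟩ := exists_eq_kappa_add_uRt_mul r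
    refine ⟨monomial n a, monomial n s, ?_⟩
    simp [← C_mul_X_pow_eq_monomial, add_mul, mul_assoc]

theorem exists_uAdic_expansion (P : Polynomial (Rt p m t)) :
    ∃ P₀ P₁ P₂ W, P = ι P₀ + U * ι P₁ + U ^ 2 * ι P₂ + U ^ 3 * W := by
  obtain ⟨P₀, V, rfl⟩ := exists_eq_map_kappa_add_C_uRt_mul P
  obtain ⟨P₁, V', rfl⟩ := exists_eq_map_kappa_add_C_uRt_mul V
  obtain ⟨P₂, W, rfl⟩ := exists_eq_map_kappa_add_C_uRt_mul V'
  exact ⟨P₀, P₁, P₂, W, by ring⟩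

theorem eq_zero_of_kappa_add_uRt_mul_add_uRt_sq_mul_eq_zero (ht : 3 ≤ t)
    {a b c : GaloisField p m}
    (h : κ p m t a + uRt p m t * κ p m t b + uRt p m t ^ 2 * κ p m t c = 0) :
    a = 0 ∧ b = 0 ∧ c = 0 := by
  set q : Polynomial (GaloisField p m) := C a + C b * X + C c * X ^ 2 with hq_def
  have hq : mkRt p m t q = 0 := by
    rw [← h]
    simp only [q, κ, uRt, RingHom.comp_apply, map_add, map_mul, map_pow]
    ring
  have hdvd : X ^ t ∣ q := Ideal.mem_span_singleton.1 (Ideal.Quotient.eq_zero_iff_mem.1 hq)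
  have hq0 : q = 0 := by
    refine eq_zero_of_dvd_of_degree_lt hdvd ?_
    rw [degree_X_pow]
    calc q.degree ≤ 2 := by rw [hq_def]; compute_degree
      _ < t := by exact_mod_cast ht
  refine ⟨?_, ?_, ?_⟩
  · simpa [q] using congrArg (coeff · 0) hq0
  · simpa [q] using congrArg (coeff · 1) hq0
  · simpa [q] using congrArg (coeff · 2) hq0

theorem eq_zero_of_map_kappa_add_C_uRt_mul_add_eq_zero (ht : 3 ≤ t)
    {P₀ P₁ P₂ : Polynomial (GaloisField p m)} (h : ι P₀ + U * ι P₁ + U ^ 2 * ι P₂ = 0) :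
    P₀ = 0 ∧ P₁ = 0 ∧ P₂ = 0 := by
  have hcoeff (n : ℕ) : P₀.coeff n = 0 ∧ P₁.coeff n = 0 ∧ P₂.coeff n = 0 :=
    eq_zero_of_kappa_add_uRt_mul_add_uRt_sq_mul_eq_zero ht <| by
      simpa only [coeff_add, ← C_pow, coeff_C_mul, coeff_map, coeff_zero] using
        congrArg (coeff · n) h
  exact ⟨ext fun n => (hcoeff n).1, ext fun n => (hcoeff n).2.1, ext fun n => (hcoeff n).2.2⟩

end ChainRing

-- Instance search does not find this one (it fails to see `Rt p m t` as a quotient ring);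
-- `mkQr` supplies the same instance by hand.
instance Qr.isTwoSided (p m t : ℕ) [Fact p.Prime] (N : ℕ) (δ : Rt p m t) :
    (Ideal.span {X ^ N - C δ} : Ideal (Polynomial (Rt p m t))).IsTwoSided :=
  @Ideal.instIsTwoSided_1 (Polynomial (Rt p m t)) _ _

theorem mkQr_surjective {p m t : ℕ} [Fact p.Prime] {N : ℕ} {δ : Rt p m t} :
    Function.Surjective (mkQr p m t N δ) :=
  Ideal.Quotient.mk_surjective

theorem mkQr_eq_zero_iff {p m t : ℕ} [Fact p.Prime] {N : ℕ} {δ : Rt p m t}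
    (P : Polynomial (Rt p m t)) : mkQr p m t N δ P = 0 ↔ P ∈ Ideal.span {X ^ N - C δ} :=
  Ideal.Quotient.eq_zero_iff_mem

section QuotientRing

variable {p m : ℕ} [Fact p.Prime] {N : ℕ} {d₀ d₂ : GaloisField p m}

local notation "ι" => Polynomial.map (κ p m 3)
local notation "U" => (C (uRt p m 3) : Polynomial (Rt p m 3))
local notation "mkS" => mkQr p m 3 N (mkRt p m 3 (C d₀ + C d₂ * X ^ 2))

theorem X_pow_sub_C_mkRt :
    (X ^ N - C (mkRt p m 3 (C d₀ + C d₂ * X ^ 2)) : Polynomial (Rt p m 3)) =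
      ι (X ^ N - C d₀) - U ^ 2 * ι (C d₂) := by
  simp only [κ, uRt, map_add, map_mul, map_pow, Polynomial.map_sub,
    Polynomial.map_pow, map_X, map_C, RingHom.comp_apply]
  ring

theorem mkQr_C_uRt_pow_three : mkS U ^ 3 = 0 := by
  rw [← map_pow, C_uRt_pow_self, map_zero]

theorem dvd_of_C_uRt_mul_add_mem_span (hN : N ≠ 0) {A B : Polynomial (GaloisField p m)}
    (h : U * ι A + U ^ 2 * ι B ∈ Ideal.span {X ^ N - C (mkRt p m 3 (C d₀ + C d₂ * X ^ 2))}) :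
    X ^ N - C d₀ ∣ A ∧ X ^ N - C d₀ ∣ B := by
  obtain ⟨Q, hQ⟩ := (Ideal.mem_span_singleton (α := Polynomial (Rt p m 3))).1 h
  obtain ⟨Q₀, Q₁, Q₂, W, rfl⟩ := exists_uAdic_expansion Q
  rw [X_pow_sub_C_mkRt] at hQ
  set f := (X ^ N - C d₀ : Polynomial (GaloisField p m))
  have hexp : ι (-(f * Q₀)) + U * ι (A - f * Q₁) + U ^ 2 * ι (B - f * Q₂ + C d₂ * Q₀) = 0 := by
    simp only [Polynomial.map_add, Polynomial.map_sub, Polynomial.map_mul, Polynomial.map_neg]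
    linear_combination hQ + (ι f * W - ι (C d₂) * ι Q₁ - U * ι (C d₂) * ι Q₂
      - U ^ 2 * ι (C d₂) * W) * C_uRt_pow_self (p := p) (m := m) (t := 3)
  obtain ⟨h₀, h₁, h₂⟩ := eq_zero_of_map_kappa_add_C_uRt_mul_add_eq_zero le_rfl hexp
  obtain rfl : Q₀ = 0 := by
    simpa [f, X_pow_sub_C_ne_zero (Nat.pos_of_ne_zero hN)] using h₀
  exact ⟨⟨Q₁, sub_eq_zero.1 h₁⟩, ⟨Q₂, by simpa [sub_eq_zero] using h₂⟩⟩

theorem exists_dvd_of_mem_span (hN : N ≠ 0) {G₁ G₂ D : Polynomial (GaloisField p m)}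
    (h : mkS U ^ 2 * mkS (ι D) ∈ Ideal.span {mkS U * mkS (ι G₁) + mkS U ^ 2 * mkS (ι G₂)}) :
    ∃ P₀ P₁, X ^ N - C d₀ ∣ P₀ * G₁ ∧ X ^ N - C d₀ ∣ P₀ * G₂ + P₁ * G₁ - D := by
  obtain ⟨c, hc⟩ := Ideal.mem_span_singleton'.1 h
  obtain ⟨P, rfl⟩ := mkQr_surjective c
  obtain ⟨P₀, P₁, P₂, W, rfl⟩ := exists_uAdic_expansion P
  refine ⟨P₀, P₁, dvd_of_C_uRt_mul_add_mem_span (d₂ := d₂) hN ((mkQr_eq_zero_iff _).1 ?_)⟩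
  have hU3 : mkS U ^ 3 = 0 := mkQr_C_uRt_pow_three
  simp only [map_add, map_mul, map_sub, map_pow, Polynomial.map_add, Polynomial.map_sub,
    Polynomial.map_mul] at hc ⊢
  linear_combination hc - (mkS (ι P₁) * mkS (ι G₂) + mkS (ι P₂) * mkS (ι G₁)
    + mkS U * mkS (ι P₂) * mkS (ι G₂) + mkS U * mkS W * mkS (ι G₁)
    + mkS U ^ 2 * mkS W * mkS (ι G₂)) * hU3

end QuotientRing

section NilpotentGenerator

variable {A : Type*} [CommRing A] {u y H : A} {a τ : ℕ}

theorem sq_mul_pow_mem_span_self (hu : u ^ 3 = 0) :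
    u ^ 2 * y ^ a ∈ Ideal.span {u * y ^ a + u ^ 2 * y ^ τ * H} :=
  Ideal.mem_span_singleton'.2 ⟨u, by linear_combination y ^ τ * H * hu⟩

theorem sq_mul_pow_mem_span_of_isUnit {N : ℕ} {c : A} (ha : a ≤ N) (hu : u ^ 3 = 0)
    (hy : y ^ N = u ^ 2 * c) (hH : IsUnit H) :
    u ^ 2 * y ^ (N - a + τ) ∈ Ideal.span {u * y ^ a + u ^ 2 * y ^ τ * H} := by
  obtain ⟨v, hv⟩ := hH.exists_left_inv
  have hpow : y ^ (N - a) * y ^ a = y ^ N := by rw [← pow_add, Nat.sub_add_cancel ha]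
  refine Ideal.mem_span_singleton'.2 ⟨v * y ^ (N - a), ?_⟩
  rw [pow_add]
  linear_combination v * u * hpow + v * u * hy + v * c * hu + u ^ 2 * y ^ (N - a) * y ^ τ * hv

end NilpotentGenerator

theorem le_of_pow_dvd_of_pow_dvd_sub {R : Type*} [CommRing R] [IsDomain R] {y E : R}
    {T N l : ℕ} (hy₀ : y ≠ 0) (hy : ¬IsUnit y) (hTN : T ≤ N) (hE : y ^ T ∣ E)
    (hEl : y ^ N ∣ E - y ^ l) : T ≤ l :=
  (pow_dvd_pow_iff hy₀ hy).1 <| by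
    simpa using dvd_sub hE ((pow_dvd_pow y hTN).trans hEl)

theorem X_sub_C_pow_char_pow {R : Type*} [CommRing R] {p : ℕ} [ExpChar R p] {s : ℕ} {r d : R}
    (h : r ^ p ^ s = d) : (X - C r) ^ p ^ s = X ^ p ^ s - C d := by
  rw [sub_pow_expChar_pow, ← C_pow, h]

section Frobenius

variable {p m s : ℕ} [Fact p.Prime] {d₀ d₂ δ₀₀ : GaloisField p m} {a τ : ℕ}

local notation "ι" => Polynomial.map (κ p m 3)
local notation "U" => (C (uRt p m 3) : Polynomial (Rt p m 3))
local notation "mkS" => mkQr p m 3 (p ^ s) (mkRt p m 3 (C d₀ + C d₂ * X ^ 2))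

theorem mkQr_X_sub_C_pow (hδ : δ₀₀ ^ p ^ s = d₀) :
    mkS (X - C (κ p m 3 δ₀₀)) ^ p ^ s = mkS U ^ 2 * mkS (ι (C d₂)) := by
  have h : mkS (ι (X ^ p ^ s - C d₀) - U ^ 2 * ι (C d₂)) = 0 := by
    rw [← X_pow_sub_C_mkRt]
    exact (mkQr_eq_zero_iff _).2 (Ideal.subset_span rfl)
  rw [← X_sub_C_pow_char_pow hδ, map_sub, sub_eq_zero] at h
  simpa using h

theorem isNilpotent_mkQr_X_sub_C (hδ : δ₀₀ ^ p ^ s = d₀) :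
    IsNilpotent (mkS (X - C (κ p m 3 δ₀₀))) := by
  have hU3 : mkS U ^ 3 = 0 := mkQr_C_uRt_pow_three
  refine ⟨p ^ s * 2, ?_⟩
  rw [pow_mul, mkQr_X_sub_C_pow hδ]
  linear_combination mkS U * mkS (ι (C d₂)) ^ 2 * hU3

theorem isUnit_mkQr_map_of_eval_ne_zero (hδ : δ₀₀ ^ p ^ s = d₀) {h : Polynomial (GaloisField p m)}
    (hh : h.eval δ₀₀ ≠ 0) : IsUnit (mkS (ι h)) := by
  obtain ⟨q, hq⟩ := X_sub_C_dvd_sub_C_eval (p := h) (a := δ₀₀)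
  rw [sub_eq_iff_eq_add'.1 hq]
  simp only [Polynomial.map_add, Polynomial.map_mul, map_add, map_mul, Polynomial.map_sub,
    map_X, map_C]
  refine ((Commute.all _ _).isNilpotent_mul_right (isNilpotent_mkQr_X_sub_C (d₂ := d₂) hδ))
    |>.isUnit_add_left_of_commute ?_ (Commute.all _ _)
  exact (hh.isUnit.map (κ p m 3)).map (RingHom.comp mkS C)

theorem le_of_sq_mul_pow_mem_span (ha : a < p ^ s) (hδ : δ₀₀ ^ p ^ s = d₀)
    {h : Polynomial (GaloisField p m)} {l : ℕ} (hl : mkS U ^ 2 * mkS (X - C (κ p m 3 δ₀₀)) ^ l ∈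
      Ideal.span {mkS U * mkS (X - C (κ p m 3 δ₀₀)) ^ a +
        mkS U ^ 2 * mkS (X - C (κ p m 3 δ₀₀)) ^ τ * mkS (ι h)}) :
    (h = 0 → a ≤ l) ∧ min a (p ^ s - a + τ) ≤ l := by
  set Y : Polynomial (GaloisField p m) := X - C δ₀₀
  have hY₀ : Y ≠ 0 := X_sub_C_ne_zero δ₀₀
  have hl' : mkS U ^ 2 * mkS (ι (Y ^ l)) ∈
      Ideal.span {mkS U * mkS (ι (Y ^ a)) + mkS U ^ 2 * mkS (ι (Y ^ τ * h))} := by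
    simpa only [Y, Polynomial.map_pow, Polynomial.map_mul, Polynomial.map_sub, map_X, map_C,
      map_pow, map_mul, mul_assoc] using hl
  obtain ⟨P₀, P₁, hP₀, hP₁⟩ :=
    exists_dvd_of_mem_span (pow_ne_zero s (Fact.out : p.Prime).ne_zero) hl'
  rw [← X_sub_C_pow_char_pow hδ] at hP₀ hP₁
  have le_of_dvd {T : ℕ} (hT : T ≤ a) (hE : Y ^ T ∣ P₀ * (Y ^ τ * h) + P₁ * Y ^ a) : T ≤ l :=
    le_of_pow_dvd_of_pow_dvd_sub hY₀ (not_isUnit_X_sub_C δ₀₀) (by omega) hE hP₁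
  refine ⟨fun h0 => le_of_dvd le_rfl (by simp [h0]), le_of_dvd (min_le_left _ _) ?_⟩
  obtain ⟨e, he⟩ : ∃ e, p ^ s = a + e := ⟨p ^ s - a, by omega⟩
  have hYe : Y ^ e ∣ P₀ := by
    rw [he, pow_add, mul_comm] at hP₀
    exact (mul_dvd_mul_iff_right (pow_ne_zero a hY₀)).1 hP₀
  refine dvd_add ?_ ((pow_dvd_pow Y (min_le_left _ _)).trans (dvd_mul_left _ _))
  refine (pow_dvd_pow Y (min_le_right _ _)).trans ?_
  rw [he, Nat.add_sub_cancel_left, pow_add, ← mul_assoc]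
  exact (mul_dvd_mul_right hYe _).mul_right h

theorem sq_mul_pow_min_mem_span (ha : a ≤ p ^ s) (hδ : δ₀₀ ^ p ^ s = d₀)
    {h : Polynomial (GaloisField p m)} (hh : h.eval δ₀₀ ≠ 0) :
    mkS U ^ 2 * mkS (X - C (κ p m 3 δ₀₀)) ^ min a (p ^ s - a + τ) ∈
      Ideal.span {mkS U * mkS (X - C (κ p m 3 δ₀₀)) ^ a +
        mkS U ^ 2 * mkS (X - C (κ p m 3 δ₀₀)) ^ τ * mkS (ι h)} := by
  rcases min_choice a (p ^ s - a + τ) with hmin | hmin <;> rw [hmin]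
  · exact sq_mul_pow_mem_span_self mkQr_C_uRt_pow_three
  · exact sq_mul_pow_mem_span_of_isUnit ha mkQr_C_uRt_pow_three (mkQr_X_sub_C_pow hδ)
      (isUnit_mkQr_map_of_eval_ne_zero hδ hh)

end Frobenius

theorem stmt_9_general (p m s : ℕ) [Fact p.Prime]
    (d0 d2 : GaloisField p m)
    (δ00 : GaloisField p m) (hδ00 : δ00 ^ p ^ s = d0)
    (a τ : ℕ) (ha : a ≤ p ^ s - 1)
    (h : Polynomial (GaloisField p m)) (hh : h = 0 ∨ h.eval δ00 ≠ 0)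
    (L : ℕ)
    (hL : (mkQr p m 3 (p ^ s) (mkRt p m 3 (C d0 + C d2 * X ^ 2)) (C (uRt p m 3))) ^ 2 *
        (mkQr p m 3 (p ^ s) (mkRt p m 3 (C d0 + C d2 * X ^ 2))
          (X - C (κ p m 3 δ00))) ^ L ∈
      Ideal.span {mkQr p m 3 (p ^ s) (mkRt p m 3 (C d0 + C d2 * X ^ 2))
          (C (uRt p m 3)) *
        (mkQr p m 3 (p ^ s) (mkRt p m 3 (C d0 + C d2 * X ^ 2))
          (X - C (κ p m 3 δ00))) ^ a +
        (mkQr p m 3 (p ^ s) (mkRt p m 3 (C d0 + C d2 * X ^ 2)) (C (uRt p m 3))) ^ 2 *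
        (mkQr p m 3 (p ^ s) (mkRt p m 3 (C d0 + C d2 * X ^ 2))
          (X - C (κ p m 3 δ00))) ^ τ *
        mkQr p m 3 (p ^ s) (mkRt p m 3 (C d0 + C d2 * X ^ 2)) (h.map (κ p m 3))})
    (hLmin : ∀ l : ℕ,
      (mkQr p m 3 (p ^ s) (mkRt p m 3 (C d0 + C d2 * X ^ 2)) (C (uRt p m 3))) ^ 2 *
        (mkQr p m 3 (p ^ s) (mkRt p m 3 (C d0 + C d2 * X ^ 2))
          (X - C (κ p m 3 δ00))) ^ l ∈
      Ideal.span {mkQr p m 3 (p ^ s) (mkRt p m 3 (C d0 + C d2 * X ^ 2))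
          (C (uRt p m 3)) *
        (mkQr p m 3 (p ^ s) (mkRt p m 3 (C d0 + C d2 * X ^ 2))
          (X - C (κ p m 3 δ00))) ^ a +
        (mkQr p m 3 (p ^ s) (mkRt p m 3 (C d0 + C d2 * X ^ 2)) (C (uRt p m 3))) ^ 2 *
        (mkQr p m 3 (p ^ s) (mkRt p m 3 (C d0 + C d2 * X ^ 2))
          (X - C (κ p m 3 δ00))) ^ τ *
        mkQr p m 3 (p ^ s) (mkRt p m 3 (C d0 + C d2 * X ^ 2)) (h.map (κ p m 3))} →
      L ≤ l) :
    (h = 0 → L = a) ∧ (h ≠ 0 → L = min a (p ^ s - a + τ)) := by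
  have ha' : a < p ^ s := by
    have := Nat.one_le_pow s p (Fact.out : p.Prime).pos
    omega
  obtain ⟨hle_of_zero, hle_min⟩ := le_of_sq_mul_pow_mem_span ha' hδ00 hL
  refine ⟨fun h0 => le_antisymm ?_ (hle_of_zero h0), fun h0 => le_antisymm ?_ hle_min⟩
  · exact hLmin a (sq_mul_pow_mem_span_self mkQr_C_uRt_pow_three)
  · exact hLmin _ (sq_mul_pow_min_mem_span ha'.le hδ00 (hh.resolve_left h0))

/-- Let `S = R³[x]/⟨x^{p^s} − δ⟩` with `δ = δ₀ + u²δ₂`, `δ₀, δ₂ ≠ 0`.  Let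
`0 ≤ τ < a ≤ p^s − 1`, let `h ∈ 𝔽_{p^m}[x]` be zero or a unit modulo `(x − δ_{0,0})^{p^s}`,
let `C` be the ideal of `S` generated by `u(x − δ_{0,0})^a + u²(x − δ_{0,0})^τ h(x)`, and let
`L` be the smallest nonnegative integer such that `u²(x − δ_{0,0})^L ∈ C`.  Then `L = a` if
`h = 0`, and `L = min {a, p^s − a + τ}` if `h ≠ 0`. -/
theorem stmt_9 (p m s : ℕ) [Fact p.Prime] (hm : m ≠ 0)
    (d0 d2 : GaloisField p m) (hd0 : d0 ≠ 0) (hd2 : d2 ≠ 0)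
    (δ00 : GaloisField p m) (hδ00 : δ00 ^ p ^ s = d0)
    (a τ : ℕ) (hτa : τ < a) (ha : a ≤ p ^ s - 1)
    (h : Polynomial (GaloisField p m)) (hh : h = 0 ∨ h.eval δ00 ≠ 0)
    (L : ℕ)
    (hL : (mkQr p m 3 (p ^ s) (mkRt p m 3 (C d0 + C d2 * X ^ 2)) (C (uRt p m 3))) ^ 2 *
        (mkQr p m 3 (p ^ s) (mkRt p m 3 (C d0 + C d2 * X ^ 2))
          (X - C (κ p m 3 δ00))) ^ L ∈
      Ideal.span {mkQr p m 3 (p ^ s) (mkRt p m 3 (C d0 + C d2 * X ^ 2))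
          (C (uRt p m 3)) *
        (mkQr p m 3 (p ^ s) (mkRt p m 3 (C d0 + C d2 * X ^ 2))
          (X - C (κ p m 3 δ00))) ^ a +
        (mkQr p m 3 (p ^ s) (mkRt p m 3 (C d0 + C d2 * X ^ 2)) (C (uRt p m 3))) ^ 2 *
        (mkQr p m 3 (p ^ s) (mkRt p m 3 (C d0 + C d2 * X ^ 2))
          (X - C (κ p m 3 δ00))) ^ τ *
        mkQr p m 3 (p ^ s) (mkRt p m 3 (C d0 + C d2 * X ^ 2)) (h.map (κ p m 3))})
    (hLmin : ∀ l : ℕ,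
      (mkQr p m 3 (p ^ s) (mkRt p m 3 (C d0 + C d2 * X ^ 2)) (C (uRt p m 3))) ^ 2 *
        (mkQr p m 3 (p ^ s) (mkRt p m 3 (C d0 + C d2 * X ^ 2))
          (X - C (κ p m 3 δ00))) ^ l ∈
      Ideal.span {mkQr p m 3 (p ^ s) (mkRt p m 3 (C d0 + C d2 * X ^ 2))
          (C (uRt p m 3)) *
        (mkQr p m 3 (p ^ s) (mkRt p m 3 (C d0 + C d2 * X ^ 2))
          (X - C (κ p m 3 δ00))) ^ a +
        (mkQr p m 3 (p ^ s) (mkRt p m 3 (C d0 + C d2 * X ^ 2)) (C (uRt p m 3))) ^ 2 *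
        (mkQr p m 3 (p ^ s) (mkRt p m 3 (C d0 + C d2 * X ^ 2))
          (X - C (κ p m 3 δ00))) ^ τ *
        mkQr p m 3 (p ^ s) (mkRt p m 3 (C d0 + C d2 * X ^ 2)) (h.map (κ p m 3))} →
      L ≤ l) :
    (h = 0 → L = a) ∧ (h ≠ 0 → L = min a (p ^ s - a + τ)) :=
  stmt_9_general p m s d0 d2 δ00 hδ00 a τ ha h hh L hL hLmin
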